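/- arXiv:math/0402319 — 6 statements merged into one kernel-verified Lean document; each statement's English description precedes it below -/
import Mathlib

section
/- For every integer n ≥ 1, every τ ∈ ℂ with Im τ > 0, and every a ∈ ℤ, the series ψ_a(z) = ∑_{m∈ℤ, m≡a (mod n)} exp(πi(m−(n−1)/2)²τ/n + 2πi(m−(n−1)/2)z) converges absolutely and locally uniformly on ℂ, the function ψ_a is entire, and ψ_a ∈ V^e_n; that is, ψ_a(z+1) = (−1)^{n−1} ψ_a(z) and ψ_a(z+τ) = e^{−πinτ − 2πinz} ψ_a(z) for all z ∈ ℂ. -/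
open Complex

/-- The term of index `m = a + n·k` in the series defining `ψ_a`:
`exp(πi(m−(n−1)/2)²τ/n + 2πi(m−(n−1)/2)z)`. -/
noncomputable def psiTerm (n : ℕ) (τ : ℂ) (a k : ℤ) (z : ℂ) : ℂ :=
  Complex.exp ((Real.pi : ℂ) * Complex.I *
      (((a : ℂ) + (n : ℂ) * (k : ℂ)) - ((n : ℂ) - 1) / 2) ^ 2 * τ / (n : ℂ) +
    2 * (Real.pi : ℂ) * Complex.I *
      (((a : ℂ) + (n : ℂ) * (k : ℂ)) - ((n : ℂ) - 1) / 2) * z)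

/-- The theta-like basis function
`ψ_a(z) = ∑_{m ≡ a (mod n)} exp(πi(m−(n−1)/2)²τ/n + 2πi(m−(n−1)/2)z)`,
the sum over `m ≡ a (mod n)` being parametrized by `m = a + n·k`, `k ∈ ℤ`. -/
noncomputable def psi (n : ℕ) (τ : ℂ) (a : ℤ) (z : ℂ) : ℂ :=
  ∑' k : ℤ, psiTerm n τ a k z

/-- The exponential prefactor relating `psiTerm` to `jacobiTheta₂_term`. -/
noncomputable def psiC (n : ℕ) (τ : ℂ) (a : ℤ) (z : ℂ) : ℂ :=
  Complex.exp ((Real.pi : ℂ) * Complex.I * ((a : ℂ) - ((n : ℂ) - 1) / 2) ^ 2 * τ / (n : ℂ) +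
    2 * (Real.pi : ℂ) * Complex.I * ((a : ℂ) - ((n : ℂ) - 1) / 2) * z)

lemma psiTerm_eq (n : ℕ) (hn : 1 ≤ n) (τ : ℂ) (a : ℤ) (z : ℂ) (k : ℤ) :
    psiTerm n τ a k z = psiC n τ a z *
      jacobiTheta₂_term k (((a : ℂ) - ((n : ℂ) - 1) / 2) * τ + (n : ℂ) * z) ((n : ℂ) * τ) := by
  have hn0 : (n : ℂ) ≠ 0 := Nat.cast_ne_zero.mpr (by omega)
  rw [psiTerm, psiC, jacobiTheta₂_term, ← Complex.exp_add]
  congr 1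
  field_simp
  ring

lemma psi_eq (n : ℕ) (hn : 1 ≤ n) (τ : ℂ) (a : ℤ) (z : ℂ) :
    psi n τ a z = psiC n τ a z *
      jacobiTheta₂ (((a : ℂ) - ((n : ℂ) - 1) / 2) * τ + (n : ℂ) * z) ((n : ℂ) * τ) := by
  rw [psi, jacobiTheta₂, ← tsum_mul_left]
  exact tsum_congr fun k => psiTerm_eq n hn τ a z k

lemma jacobiTheta₂_add_nat (z τ : ℂ) (m : ℕ) : jacobiTheta₂ (z + m) τ = jacobiTheta₂ z τ := by
  induction m with
  | zero => simp
  | succ m ih =>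
      rw [show ((m + 1 : ℕ) : ℂ) = (m : ℂ) + 1 by push_cast; ring, ← add_assoc,
        jacobiTheta₂_add_left, ih]

lemma psiC_add_one (n : ℕ) (hn : 1 ≤ n) (τ : ℂ) (a : ℤ) (z : ℂ) :
    psiC n τ a (z + 1) = (-1) ^ (n - 1) * psiC n τ a z := by
  have h1 : ((n - 1 : ℕ) : ℂ) = (n : ℂ) - 1 := by
    simp [Nat.cast_sub hn]
  rw [psiC, psiC, show (Real.pi : ℂ) * Complex.I * ((a : ℂ) - ((n : ℂ) - 1) / 2) ^ 2 * τ / n +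
      2 * (Real.pi : ℂ) * Complex.I * ((a : ℂ) - ((n : ℂ) - 1) / 2) * (z + 1)
      = ((a : ℂ) * (2 * (Real.pi : ℂ) * Complex.I) +
          (((n - 1 : ℕ) : ℂ)) * (-((Real.pi : ℂ) * Complex.I))) +
        ((Real.pi : ℂ) * Complex.I * ((a : ℂ) - ((n : ℂ) - 1) / 2) ^ 2 * τ / n +
         2 * (Real.pi : ℂ) * Complex.I * ((a : ℂ) - ((n : ℂ) - 1) / 2) * z) by rw [h1]; ring,
    Complex.exp_add, Complex.exp_add, Complex.exp_int_mul_two_pi_mul_I, one_mul,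
    Complex.exp_nat_mul]
  congr 2
  rw [Complex.exp_neg, Complex.exp_pi_mul_I]
  norm_num

/-- The series defining `ψ_a` converges absolutely and locally uniformly on `ℂ`,
`ψ_a` is entire, and `ψ_a ∈ V^e_n`, i.e. `ψ_a(z+1) = (−1)^{n−1} ψ_a(z)` and
`ψ_a(z+τ) = e^{−πinτ−2πinz} ψ_a(z)`. -/
theorem psi_summable_entire_quasiperiodic (n : ℕ) (hn : 1 ≤ n) (τ : ℂ)
    (hτ : 0 < τ.im) (a : ℤ) :
    (∀ z : ℂ, Summable fun k : ℤ => ‖psiTerm n τ a k z‖) ∧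
    TendstoLocallyUniformly
      (fun (s : Finset ℤ) (z : ℂ) => ∑ k ∈ s, psiTerm n τ a k z)
      (psi n τ a) Filter.atTop ∧
    Differentiable ℂ (psi n τ a) ∧
    (∀ z : ℂ, psi n τ a (z + 1) = (-1) ^ (n - 1) * psi n τ a z) ∧
    (∀ z : ℂ, psi n τ a (z + τ) =
      Complex.exp (-(Real.pi : ℂ) * Complex.I * (n : ℂ) * τ -
        2 * (Real.pi : ℂ) * Complex.I * (n : ℂ) * z) * psi n τ a z) := by
  set c : ℂ := (a : ℂ) - ((n : ℂ) - 1) / 2 with hc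
  have hT : 0 < ((n : ℂ) * τ).im := by
    rw [Complex.mul_im]
    simp only [Complex.natCast_re, Complex.natCast_im, zero_mul, add_zero]
    have : (0 : ℝ) < n := by exact_mod_cast Nat.pos_of_ne_zero (by omega)
    positivity
  refine ⟨?_, ?_, ?_, ?_, ?_⟩
  · -- summability of norms
    intro z
    simp only [psiTerm_eq n hn τ a z, norm_mul]
    apply Summable.mul_left
    have hb := summable_pow_mul_jacobiTheta₂_term_bound |(c * τ + (n : ℂ) * z).im| hT 0
    simp only [pow_zero, one_mul] at hb
    exact Summable.of_nonneg_of_le (fun k => norm_nonneg _)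
      (fun k => norm_jacobiTheta₂_term_le hT le_rfl le_rfl k) hb
  · -- locally uniform convergence
    rw [tendstoLocallyUniformly_iff_forall_isCompact]
    intro K hK
    obtain ⟨M, hM⟩ := hK.exists_bound_of_continuousOn (f := fun z => psiC n τ a z)
      (Continuous.continuousOn (by unfold psiC; fun_prop))
    obtain ⟨S, hS⟩ := hK.exists_bound_of_continuousOn
      (f := fun z : ℂ => (c * τ + (n : ℂ) * z).im) (Continuous.continuousOn (by fun_prop))
    refine tendstoUniformlyOn_tsum
      (u := fun k : ℤ => max M 0 * Real.exp (-Real.pi *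
        (((n : ℂ) * τ).im * (k : ℝ) ^ 2 - 2 * S * |(k : ℝ)|)))
      (((summable_pow_mul_jacobiTheta₂_term_bound S hT 0).mul_left (max M 0)).congr
        (by intro k; push_cast; simp)) ?_
    intro k z hz
    rw [psiTerm_eq n hn τ a z k, norm_mul]
    have h1 : ‖psiC n τ a z‖ ≤ max M 0 := le_max_of_le_left (hM z hz)
    have h2 : ‖jacobiTheta₂_term k (c * τ + (n : ℂ) * z) ((n : ℂ) * τ)‖ ≤
        Real.exp (-Real.pi * (((n : ℂ) * τ).im * (k : ℝ) ^ 2 - 2 * S * |(k : ℝ)|)) := by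
      have := norm_jacobiTheta₂_term_le hT (z := c * τ + (n : ℂ) * z) (τ := (n : ℂ) * τ)
        (S := S) (by simpa [Real.norm_eq_abs] using hS z hz) le_rfl k
      simpa using this
    exact mul_le_mul h1 h2 (norm_nonneg _) (le_max_right M 0)
  · -- differentiability
    have heq : psi n τ a = fun z => psiC n τ a z *
        jacobiTheta₂ (c * τ + (n : ℂ) * z) ((n : ℂ) * τ) := funext (psi_eq n hn τ a)
    rw [heq]
    refine Differentiable.mul ?_ ?_
    · unfold psiC; fun_prop
    · intro z
      exact (differentiableAt_jacobiTheta₂_fst _ hT).comp z (by fun_prop)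
  · -- periodicity z ↦ z + 1
    intro z
    rw [psi_eq n hn τ a, psi_eq n hn τ a,
      show c * τ + (n : ℂ) * (z + 1) = (c * τ + (n : ℂ) * z) + (n : ℕ) by ring,
      jacobiTheta₂_add_nat, psiC_add_one n hn τ a z, mul_assoc]
  · -- quasi-periodicity z ↦ z + τ
    intro z
    rw [psi_eq n hn τ a, psi_eq n hn τ a,
      show c * τ + (n : ℂ) * (z + τ) = (c * τ + (n : ℂ) * z) + (n : ℂ) * τ by ring,
      jacobiTheta₂_add_left', psiC, psiC, ← mul_assoc, ← mul_assoc,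
      ← Complex.exp_add, ← Complex.exp_add]
    congr 2
    ring
end

section
/- For every integer n ≥ 1 and τ ∈ ℂ with Im τ > 0, the functions ψ_0, ψ_1, …, ψ_{n−1} form a basis of V^e_n over ℂ: they are linearly independent, and every f ∈ V^e_n is a ℂ-linear combination of ψ_0, …, ψ_{n−1}. In particular dim_ℂ V^e_n = n. -/
open Complex

/-- Membership in `V^e_n`: entire functions with the two quasi-periodicity
properties `f(z+1) = (−1)^{n−1} f(z)` and `f(z+τ) = e^{−πinτ−2πinz} f(z)`. -/
def MemVe (n : ℕ) (τ : ℂ) (f : ℂ → ℂ) : Prop :=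
  Differentiable ℂ f ∧
  (∀ z : ℂ, f (z + 1) = (-1) ^ (n - 1) * f z) ∧
  (∀ z : ℂ, f (z + τ) =
    Complex.exp (-(Real.pi : ℂ) * Complex.I * (n : ℂ) * τ -
      2 * (Real.pi : ℂ) * Complex.I * (n : ℂ) * z) * f z)

/-- `V^e_n` as a subspace of the space of all functions `ℂ → ℂ`. -/
noncomputable def Ve (n : ℕ) (τ : ℂ) : Submodule ℂ (ℂ → ℂ) where
  carrier := {f | MemVe n τ f}
  add_mem' := by
    rintro f g ⟨hf1, hf2, hf3⟩ ⟨hg1, hg2, hg3⟩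
    refine ⟨hf1.add hg1, fun z => ?_, fun z => ?_⟩
    · simp only [Pi.add_apply, hf2 z, hg2 z]; ring
    · simp only [Pi.add_apply, hf3 z, hg3 z]; ring
  zero_mem' := by
    refine ⟨?_, fun z => ?_, fun z => ?_⟩
    · exact differentiable_const (0 : ℂ)
    · simp
    · simp
  smul_mem' := by
    rintro c f ⟨hf1, hf2, hf3⟩
    refine ⟨hf1.const_smul c, fun z => ?_, fun z => ?_⟩
    · simp only [Pi.smul_apply, smul_eq_mul, hf2 z]; ring
    · simp only [Pi.smul_apply, smul_eq_mul, hf3 z]; ring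

/-!
With `θ = (n - 1)/2`, multiplying by `e^{2πiθz}` turns `f(z+1) = (-1)^{n-1} f(z)` into
1-periodicity, so `g = f·e^{2πiθz}` is an entire 1-periodic function whose Fourier coefficients
`c_m` may be computed along any horizontal line (Cauchy's theorem). Along `ℝ + τ` the
`τ`-quasi-periodicity of `f` gives `c_{m+n} = e^{πiτ(2m+1)} c_m`, i.e. `c_m / w_m` is
`n`-periodic for the Gaussian weights `w_m = e^{πi(m-θ)²τ/n}`. As `ψ_a·e^{2πiθz}` is the
absolutely convergent series `∑_{m ≡ a} w_m e^{2πimz}`, grouping the Fourier series of `g` by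
residues mod `n` shows both that it converges (so Fourier inversion applies) and that
`f = ∑_a (c_a / w_a) ψ_a`. Conversely the Fourier coefficients of
`(∑_a b_a ψ_a)·e^{2πiθz}` are `b_{m mod n} w_m`, which vanish only if all `b_a` do.
-/

open Real

theorem hasSum_prod_of_hasSum_fiberwise {α β γ : Type*} [AddCommMonoid α] [TopologicalSpace α]
    [ContinuousAdd α] [Fintype γ] {F : β × γ → α} {s : γ → α}
    (h : ∀ c, HasSum (fun b => F (b, c)) (s c)) : HasSum F (∑ c, s c) := by
  classical
  have hfiber (c : γ) : HasSum (fun p : β × γ => if p.2 = c then F p else 0) (s c) := by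
    refine ((Prod.mk_left_injective c).hasSum_iff fun p hp => ?_).mp
      (by simpa [Function.comp_def] using h c)
    rw [if_neg]
    rintro rfl
    exact hp ⟨p.1, rfl⟩
  simpa [Finset.sum_ite_eq'] using hasSum_sum (s := Finset.univ) fun c _ => hfiber c

theorem hasSum_int_of_hasSum_residueClasses {α : Type*} [AddCommMonoid α] [TopologicalSpace α]
    [ContinuousAdd α] {n : ℕ} [NeZero n] {F : ℤ → α} {s : Fin n → α}
    (h : ∀ a : Fin n, HasSum (fun k : ℤ => F (k * n + a)) (s a)) : HasSum F (∑ a, s a) :=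
  (Int.divModEquiv n).symm.hasSum_iff.mp (hasSum_prod_of_hasSum_fiberwise h)

theorem intervalIntegral_add_mul_I_eq_of_periodic {h : ℂ → ℂ} (hd : Differentiable ℂ h)
    (hp : ∀ z, h (z + 1) = h z) (y : ℝ) :
    ∫ x in (0 : ℝ)..1, h (x + y * I) = ∫ x in (0 : ℝ)..1, h x := by
  have hrect := integral_boundary_rect_eq_zero_of_differentiableOn h 0 (1 + y * I)
    hd.differentiableOn
  have hsides : ∫ t in (0 : ℝ)..y, h (1 + t * I) = ∫ t in (0 : ℝ)..y, h (t * I) :=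
    intervalIntegral.integral_congr fun t _ => by rw [add_comm, hp]
  simp only [add_re, one_re, mul_I_re, ofReal_re, ofReal_im, zero_re, zero_im, add_im, one_im,
    mul_I_im, neg_zero, add_zero, zero_add, ofReal_zero, zero_mul, ofReal_one, smul_eq_mul,
    hsides] at hrect
  linear_combination -hrect

theorem intervalIntegral_comp_add_eq_of_periodic {h : ℂ → ℂ} (hd : Differentiable ℂ h)
    (hp : ∀ z, h (z + 1) = h z) (w : ℂ) :
    ∫ x in (0 : ℝ)..1, h (x + w) = ∫ x in (0 : ℝ)..1, h x := by
  have hper : Function.Periodic (fun x : ℝ => h (x + w.im * I)) 1 := fun x => by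
    simpa [add_right_comm] using hp (x + w.im * I)
  calc ∫ x in (0 : ℝ)..1, h (x + w)
      = ∫ x in (0 : ℝ)..1, h ((x + w.re : ℝ) + w.im * I) := by
        simp_rw [ofReal_add, add_assoc, re_add_im]
    _ = ∫ x in w.re..w.re + 1, h (x + w.im * I) := by
        rw [intervalIntegral.integral_comp_add_right (fun x : ℝ => h (x + w.im * I)), zero_add,
          add_comm 1]
    _ = ∫ x in (0 : ℝ)..0 + 1, h (x + w.im * I) := hper.intervalIntegral_add_eq w.re 0
    _ = ∫ x in (0 : ℝ)..1, h x := by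
        rw [zero_add, intervalIntegral_add_mul_I_eq_of_periodic hd hp]

noncomputable def unitFourierCoeff (g : ℂ → ℂ) (m : ℤ) : ℂ :=
  ∫ x in (0 : ℝ)..1, g x * cexp (-(2 * π * I * m * x))

theorem exp_two_pi_I_int_mul_add_one (m : ℤ) (z : ℂ) :
    cexp (2 * π * I * m * (z + 1)) = cexp (2 * π * I * m * z) := by
  rw [mul_add, mul_one, Complex.exp_add, mul_comm _ (m : ℂ), exp_int_mul_two_pi_mul_I, mul_one]

theorem unitFourierCoeff_eq_intervalIntegral_add {g : ℂ → ℂ} (hd : Differentiable ℂ g)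
    (hp : ∀ z, g (z + 1) = g z) (m : ℤ) (w : ℂ) :
    ∫ x in (0 : ℝ)..1, g (x + w) * cexp (-(2 * π * I * m * (x + w))) = unitFourierCoeff g m :=
  intervalIntegral_comp_add_eq_of_periodic (h := fun z => g z * cexp (-(2 * π * I * m * z)))
    (hd.mul (differentiable_exp.comp (by fun_prop)))
    (fun z => by
      rw [hp, mul_add, mul_one, neg_add, Complex.exp_add,
        show -(2 * π * I * m) = ((-m : ℤ) : ℂ) * (2 * π * I) by push_cast; ring,
        exp_int_mul_two_pi_mul_I, mul_one]) w

theorem hasSum_unitFourierCoeff {g : ℂ → ℂ} (hd : Differentiable ℂ g)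
    (hp : ∀ z, g (z + 1) = g z)
    (hs : ∀ z, Summable fun m : ℤ => unitFourierCoeff g m * cexp (2 * π * I * m * z))
    (z : ℂ) :
    HasSum (fun m : ℤ => unitFourierCoeff g m * cexp (2 * π * I * m * z)) (g z) := by
  have : Fact ((0 : ℝ) < 1) := ⟨one_pos⟩
  have hper : Function.Periodic (fun x : ℝ => g (x + z.im * I)) 1 := fun x => by
    simpa [add_right_comm] using hp (x + z.im * I)
  let G : C(AddCircle (1 : ℝ), ℂ) :=
    ⟨hper.lift, continuous_coinduced_dom.mpr (hd.continuous.comp (by fun_prop))⟩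
  have hcoeff (m : ℤ) : fourierCoeff G m =
      unitFourierCoeff g m * cexp (2 * π * I * m * (z.im * I)) := by
    rw [fourierCoeff_eq_intervalIntegral _ m 0,
      ← unitFourierCoeff_eq_intervalIntegral_add hd hp m (z.im * I),
      ← intervalIntegral.integral_mul_const, zero_add, div_one, one_smul]
    refine intervalIntegral.integral_congr fun x _ => ?_
    simp only [G, ContinuousMap.coe_mk, Function.Periodic.lift_coe, fourier_coe_apply,
      smul_eq_mul, ofReal_one, div_one, mul_assoc, ← Complex.exp_add]
    push_cast
    ring_nf
  have := has_pointwise_sum_fourier_series_of_summable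
    (by simpa only [← hcoeff] using hs (z.im * I)) (z.re : AddCircle (1 : ℝ))
  convert this using 1
  · ext m
    rw [hcoeff, fourier_coe_apply, smul_eq_mul, mul_assoc (unitFourierCoeff g m),
      ← Complex.exp_add]
    congr 2
    conv_lhs => rw [← re_add_im z]
    push_cast
    ring
  · simp [G, re_add_im]

theorem intervalIntegral_exp_two_pi_I_int_mul (j : ℤ) :
    ∫ x in (0 : ℝ)..1, cexp (2 * π * I * j * x) = if j = 0 then 1 else 0 := by
  split_ifs with hj
  · simp [hj]
  · have hc : 2 * π * I * j ≠ 0 := by simp [pi_ne_zero, hj]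
    rw [integral_exp_mul_complex hc, ofReal_one, ofReal_zero, mul_one, mul_zero, Complex.exp_zero,
      mul_comm _ (j : ℂ), exp_int_mul_two_pi_mul_I, sub_self, zero_div]

theorem unitFourierCoeff_tsum {d : ℤ → ℂ} (hd : Summable d) (m : ℤ) :
    unitFourierCoeff (fun z => ∑' k : ℤ, d k * cexp (2 * π * I * k * z)) m = d m := by
  let term (k : ℤ) : C(ℝ, ℂ) :=
    ⟨fun x => d k * cexp (2 * π * I * (k - m : ℤ) * x), by fun_prop⟩
  have hbound : Summable fun k => ‖(term k).restrict
      (⟨Set.uIcc 0 1, isCompact_uIcc⟩ : TopologicalSpace.Compacts ℝ)‖ := by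
    refine hd.norm.of_nonneg_of_le (fun _ => norm_nonneg _) fun k =>
      (ContinuousMap.norm_le _ (norm_nonneg _)).mpr fun x => ?_
    simp only [term, ContinuousMap.restrict_apply, ContinuousMap.coe_mk, norm_mul]
    rw [norm_exp, show (2 * π * I * ((k - m : ℤ) : ℂ) * (x : ℝ)).re = 0 by simp,
      Real.exp_zero, mul_one]
  calc unitFourierCoeff (fun z => ∑' k : ℤ, d k * cexp (2 * π * I * k * z)) m
      = ∫ x in (0 : ℝ)..1, ∑' k : ℤ, term k x := by
        refine intervalIntegral.integral_congr fun x _ => ?_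
        simp only [term, ContinuousMap.coe_mk, ← tsum_mul_right, mul_assoc, ← Complex.exp_add]
        congr! 3 with k
        congr 1
        push_cast
        ring
    _ = ∑' k : ℤ, d k * if k - m = 0 then 1 else 0 := by
        rw [← intervalIntegral.tsum_intervalIntegral_eq_of_summable_norm hbound]
        simp only [term, ContinuousMap.coe_mk, intervalIntegral.integral_const_mul,
          intervalIntegral_exp_two_pi_I_int_mul]
    _ = d m := by simp [sub_eq_zero]

noncomputable def psiShift (n : ℕ) : ℂ := ((n : ℂ) - 1) / 2

noncomputable def gaussWeight (n : ℕ) (τ : ℂ) (m : ℤ) : ℂ :=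
  cexp (π * I * (m - psiShift n) ^ 2 * τ / n)

section Psi

variable {n : ℕ} {τ : ℂ}

theorem natCast_mul_im_pos [NeZero n] (hτ : 0 < τ.im) : 0 < ((n : ℂ) * τ).im := by
  simpa using mul_pos (Nat.cast_pos.mpr (NeZero.pos n)) hτ

theorem psiTerm_mul_exp_psiShift (a k : ℤ) (z : ℂ) :
    psiTerm n τ a k z * cexp (2 * π * I * psiShift n * z) =
      gaussWeight n τ (k * n + a) * cexp (2 * π * I * (k * n + a : ℤ) * z) := by
  rw [psiTerm, gaussWeight, psiShift, ← Complex.exp_add, ← Complex.exp_add]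
  push_cast
  ring_nf

theorem psiTerm_eq_mul_jacobiTheta₂_term [NeZero n] (a k : ℤ) (z : ℂ) :
    psiTerm n τ a k z =
      cexp (π * I * (a - psiShift n) ^ 2 * τ / n + 2 * π * I * (a - psiShift n) * z) *
      jacobiTheta₂_term k ((a - psiShift n) * τ + n * z) (n * τ) := by
  have hn : (n : ℂ) ≠ 0 := Nat.cast_ne_zero.mpr (NeZero.ne n)
  rw [psiTerm, jacobiTheta₂_term, ← Complex.exp_add, psiShift]
  congr 1
  field_simp
  ring

theorem summable_psiTerm [NeZero n] (hτ : 0 < τ.im) (a : ℤ) (z : ℂ) :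
    Summable fun k => psiTerm n τ a k z :=
  (((summable_jacobiTheta₂_term_iff _ _).mpr (natCast_mul_im_pos hτ)).mul_left _).congr fun k =>
    (psiTerm_eq_mul_jacobiTheta₂_term a k z).symm

theorem psi_eq_mul_jacobiTheta₂ [NeZero n] (a : ℤ) (z : ℂ) :
    psi n τ a z =
      cexp (π * I * (a - psiShift n) ^ 2 * τ / n + 2 * π * I * (a - psiShift n) * z) *
      jacobiTheta₂ ((a - psiShift n) * τ + n * z) (n * τ) := by
  simp only [psi, psiTerm_eq_mul_jacobiTheta₂_term, jacobiTheta₂, tsum_mul_left]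

theorem gaussWeight_add [NeZero n] (m : ℤ) :
    gaussWeight n τ (m + n) = cexp (π * I * τ * (2 * m + 1)) * gaussWeight n τ m := by
  have hn : (n : ℂ) ≠ 0 := Nat.cast_ne_zero.mpr (NeZero.ne n)
  rw [gaussWeight, gaussWeight, ← Complex.exp_add, psiShift]
  congr 1
  field_simp
  push_cast
  ring

theorem hasSum_gaussWeight_mul_exp [NeZero n] (hτ : 0 < τ.im) (a : ℤ) (z : ℂ) :
    HasSum (fun k : ℤ => gaussWeight n τ (k * n + a) * cexp (2 * π * I * (k * n + a : ℤ) * z))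
      (psi n τ a z * cexp (2 * π * I * psiShift n * z)) := by
  have h := (summable_psiTerm (n := n) hτ a z).hasSum.mul_right
    (cexp (2 * π * I * psiShift n * z))
  rwa [funext fun k => psiTerm_mul_exp_psiShift a k z] at h

theorem exp_two_pi_I_mul_psiShift [NeZero n] :
    cexp (2 * π * I * psiShift n) = (-1) ^ (n - 1) := by
  obtain ⟨m, rfl⟩ := Nat.exists_eq_add_one.mpr (NeZero.pos n)
  rw [psiShift,
    show 2 * π * I * ((((m + 1 : ℕ) : ℂ) - 1) / 2) = m * (π * I) by push_cast; ring,
    Complex.exp_nat_mul, exp_pi_mul_I, Nat.add_sub_cancel]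

theorem add_one_mul_exp_psiShift_iff [NeZero n] {f : ℂ → ℂ} :
    (∀ z, f (z + 1) * cexp (2 * π * I * psiShift n * (z + 1)) =
      f z * cexp (2 * π * I * psiShift n * z)) ↔ ∀ z, f (z + 1) = (-1) ^ (n - 1) * f z := by
  have hsq : ((-1 : ℂ) ^ (n - 1)) ^ 2 = 1 := by
    rw [← pow_mul, Even.neg_one_pow ⟨n - 1, by ring⟩]
  refine forall_congr' fun z => ?_
  rw [mul_add, mul_one, Complex.exp_add, exp_two_pi_I_mul_psiShift, ← mul_assoc,
    mul_right_comm, mul_left_inj' (Complex.exp_ne_zero _)]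
  constructor <;> intro h
  · linear_combination (-1) ^ (n - 1) * h - f (z + 1) * hsq
  · linear_combination (-1) ^ (n - 1) * h + f z * hsq

theorem psi_add_one [NeZero n] (hτ : 0 < τ.im) (a : ℤ) (z : ℂ) :
    psi n τ a (z + 1) = (-1) ^ (n - 1) * psi n τ a z := by
  refine add_one_mul_exp_psiShift_iff.mp (fun z => ?_) z
  refine (hasSum_gaussWeight_mul_exp hτ a (z + 1)).unique ?_
  simpa only [exp_two_pi_I_int_mul_add_one] using hasSum_gaussWeight_mul_exp hτ a z

theorem psi_add_tau [NeZero n] (a : ℤ) (z : ℂ) :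
    psi n τ a (z + τ) = cexp (-π * I * n * τ - 2 * π * I * n * z) * psi n τ a z := by
  rw [psi_eq_mul_jacobiTheta₂, psi_eq_mul_jacobiTheta₂,
    show (a - psiShift n) * τ + n * (z + τ) = (a - psiShift n) * τ + n * z + n * τ by ring,
    jacobiTheta₂_add_left', ← mul_assoc, ← mul_assoc, ← Complex.exp_add,
    ← Complex.exp_add]
  congr 2
  ring

theorem differentiable_psi [NeZero n] (hτ : 0 < τ.im) (a : ℤ) :
    Differentiable ℂ (psi n τ a) := by
  simp only [funext (psi_eq_mul_jacobiTheta₂ (n := n) (τ := τ) a)]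
  exact (Complex.differentiable_exp.comp (by fun_prop)).mul fun z =>
    (differentiableAt_jacobiTheta₂_fst _ (natCast_mul_im_pos hτ)).comp z (by fun_prop)

theorem memVe_psi [NeZero n] (hτ : 0 < τ.im) (a : ℤ) : MemVe n τ (psi n τ a) :=
  ⟨differentiable_psi hτ a, psi_add_one hτ a, psi_add_tau a⟩

end Psi

section MemVe

variable {n : ℕ} {τ : ℂ} {f : ℂ → ℂ}

theorem MemVe.mul_exp_psiShift_add_one [NeZero n] (hf : MemVe n τ f) (z : ℂ) :
    f (z + 1) * cexp (2 * π * I * psiShift n * (z + 1)) =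
      f z * cexp (2 * π * I * psiShift n * z) :=
  add_one_mul_exp_psiShift_iff.mpr hf.2.1 z

theorem MemVe.differentiable_mul_exp_psiShift (hf : MemVe n τ f) :
    Differentiable ℂ fun z => f z * cexp (2 * π * I * psiShift n * z) :=
  hf.1.mul (Complex.differentiable_exp.comp (by fun_prop))

theorem MemVe.unitFourierCoeff_eq_exp_mul_add [NeZero n] (hf : MemVe n τ f) (m : ℤ) :
    unitFourierCoeff (fun z => f z * cexp (2 * π * I * psiShift n * z)) m =
      cexp (-(π * I * τ * (2 * m + 1))) *
        unitFourierCoeff (fun z => f z * cexp (2 * π * I * psiShift n * z)) (m + n) := by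
  rw [← unitFourierCoeff_eq_intervalIntegral_add hf.differentiable_mul_exp_psiShift
    hf.mul_exp_psiShift_add_one m τ, unitFourierCoeff, ← intervalIntegral.integral_const_mul]
  refine intervalIntegral.integral_congr fun x _ => ?_
  simp only [hf.2.2, mul_assoc, mul_left_comm _ (f x), ← Complex.exp_add]
  congr 2
  rw [psiShift]
  push_cast
  ring

theorem MemVe.periodic_unitFourierCoeff_div_gaussWeight [NeZero n] (hf : MemVe n τ f) :
    Function.Periodic (fun m : ℤ =>
      unitFourierCoeff (fun z => f z * cexp (2 * π * I * psiShift n * z)) m / gaussWeight n τ m)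
      n := fun m => by
  have hw : gaussWeight n τ m ≠ 0 := Complex.exp_ne_zero _
  have hE : cexp (π * I * τ * (2 * m + 1)) ≠ 0 := Complex.exp_ne_zero _
  simp only [hf.unitFourierCoeff_eq_exp_mul_add m, gaussWeight_add, Complex.exp_neg]
  field_simp

end MemVe

section Basis

variable {n : ℕ} [NeZero n] {τ : ℂ}

theorem hasSum_of_eq_mul_gaussWeight (hτ : 0 < τ.im) {b : Fin n → ℂ} {d : ℤ → ℂ}
    (hd : ∀ (a : Fin n) (k : ℤ), d (k * n + a) = b a * gaussWeight n τ (k * n + a)) (z : ℂ) :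
    HasSum (fun m : ℤ => d m * cexp (2 * π * I * m * z))
      ((∑ a : Fin n, b a * psi n τ a z) * cexp (2 * π * I * psiShift n * z)) := by
  rw [Finset.sum_mul]
  refine hasSum_int_of_hasSum_residueClasses fun a => ?_
  simpa only [hd, mul_assoc, Int.cast_add, Int.cast_mul, Int.cast_natCast] using
    (hasSum_gaussWeight_mul_exp hτ a z).mul_left (b a)

theorem MemVe.eq_sum_psi (hτ : 0 < τ.im) {f : ℂ → ℂ} (hf : MemVe n τ f) (z : ℂ) :
    f z = ∑ a : Fin n,
      unitFourierCoeff (fun z => f z * cexp (2 * π * I * psiShift n * z)) a /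
        gaussWeight n τ a * psi n τ a z := by
  have hd (a : Fin n) (k : ℤ) := (div_eq_iff (Complex.exp_ne_zero _)).mp
    (hf.periodic_unitFourierCoeff_div_gaussWeight.int_mul k a)
  have hsum := hasSum_of_eq_mul_gaussWeight hτ (fun a k => by rw [add_comm]; exact hd a k)
  have := hasSum_unitFourierCoeff hf.differentiable_mul_exp_psiShift hf.mul_exp_psiShift_add_one
    (fun w => (hsum w).summable) z
  exact mul_right_cancel₀ (Complex.exp_ne_zero _) (this.unique (hsum z))

theorem linearIndependent_psi (hτ : 0 < τ.im) :
    LinearIndependent ℂ fun a : Fin n => psi n τ a := by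
  refine Fintype.linearIndependent_iff.mpr fun b hb a => ?_
  set d : ℤ → ℂ := fun m => b (Int.divModEquiv n m).2 * gaussWeight n τ m
  have hd (a : Fin n) (k : ℤ) : d (k * n + a) = b a * gaussWeight n τ (k * n + a) := by
    have := (Int.divModEquiv n).apply_symm_apply (k, a)
    rw [Int.divModEquiv_symm_apply] at this
    simp only [d, this]
  have hzero (z : ℂ) : HasSum (fun m : ℤ => d m * cexp (2 * π * I * m * z)) 0 := by
    have hbz : ∑ a : Fin n, b a * psi n τ a z = 0 := by
      simpa [Finset.sum_apply] using congrFun hb z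
    simpa [hbz] using hasSum_of_eq_mul_gaussWeight hτ hd z
  have hcoeff := unitFourierCoeff_tsum (by simpa using (hzero 0).summable) a
  simp only [fun z => (hzero z).tsum_eq, unitFourierCoeff, zero_mul,
    intervalIntegral.integral_zero] at hcoeff
  have := hd a 0
  rw [zero_mul, zero_add, ← hcoeff, eq_comm, mul_eq_zero] at this
  exact this.resolve_right (Complex.exp_ne_zero _)

end Basis

/-- The functions `ψ_0, …, ψ_{n−1}` form a basis of `V^e_n`: they are linearly
independent, every `f ∈ V^e_n` is a linear combination of them, and
`dim_ℂ V^e_n = n`. -/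
theorem psi_basis_of_Ve (n : ℕ) (hn : 1 ≤ n) (τ : ℂ) (hτ : 0 < τ.im) :
    LinearIndependent ℂ (fun a : Fin n => psi n τ (a : ℤ)) ∧
    (∀ f : ℂ → ℂ, MemVe n τ f →
      ∃ c : Fin n → ℂ, ∀ z : ℂ, f z = ∑ a : Fin n, c a * psi n τ (a : ℤ) z) ∧
    Module.finrank ℂ (Ve n τ) = n := by
  have : NeZero n := ⟨by omega⟩
  have hli := linearIndependent_psi (n := n) hτ
  have hspan : ∀ f : ℂ → ℂ, MemVe n τ f →
      ∃ c : Fin n → ℂ, ∀ z : ℂ, f z = ∑ a : Fin n, c a * psi n τ (a : ℤ) z :=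
    fun f hf => ⟨_, hf.eq_sum_psi hτ⟩
  have hVe : Ve n τ = Submodule.span ℂ (Set.range fun a : Fin n => psi n τ a) := by
    refine le_antisymm (fun f hf => ?_) (Submodule.span_le.mpr ?_)
    · obtain ⟨c, hc⟩ := hspan f hf
      exact (Submodule.mem_span_range_iff_exists_fun ℂ).mpr
        ⟨c, funext fun z => by simp [Finset.sum_apply, hc z]⟩
    · rintro _ ⟨a, rfl⟩
      exact memVe_psi hτ a
  exact ⟨hli, hspan, by rw [hVe, finrank_span_eq_card hli, Fintype.card_fin]⟩
end

section
/- Let n ≥ 1 be an integer, τ ∈ ℂ with Im τ > 0, and define (Sf)(z) = e^{πi(n−1)/n} f(z + 1/n) and (Tf)(z) = e^{πiτ/n − 2πiz} f(z − τ/n). Then for every a ∈ ℤ: S ψ_a = e^{2πia/n} ψ_a and T ψ_a = ψ_{a−1}. -/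
open Complex

/-- The operator `S`: `(Sf)(z) = e^{πi(n−1)/n} f(z + 1/n)`. -/
noncomputable def opS (n : ℕ) (f : ℂ → ℂ) : ℂ → ℂ := fun z =>
  Complex.exp ((Real.pi : ℂ) * Complex.I * ((n : ℂ) - 1) / (n : ℂ)) * f (z + 1 / (n : ℂ))

/-- The operator `T`: `(Tf)(z) = e^{πiτ/n − 2πiz} f(z − τ/n)`. -/
noncomputable def opT (n : ℕ) (τ : ℂ) (f : ℂ → ℂ) : ℂ → ℂ := fun z =>
  Complex.exp ((Real.pi : ℂ) * Complex.I * τ / (n : ℂ) -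
    2 * (Real.pi : ℂ) * Complex.I * z) * f (z - τ / (n : ℂ))

/-- On the theta basis, `S ψ_a = e^{2πia/n} ψ_a` and `T ψ_a = ψ_{a−1}`. -/
theorem opS_opT_on_psi (n : ℕ) (hn : 1 ≤ n) (τ : ℂ) (hτ : 0 < τ.im) (a : ℤ) :
    opS n (psi n τ a) =
      (fun z => Complex.exp (2 * (Real.pi : ℂ) * Complex.I * (a : ℂ) / (n : ℂ)) *
        psi n τ a z) ∧
    opT n τ (psi n τ a) = psi n τ (a - 1) := by
  have hn0 : (n : ℂ) ≠ 0 := Nat.cast_ne_zero.mpr (by omega)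
  constructor
  · funext z
    simp only [opS, psi, psiTerm]
    rw [← tsum_mul_left, ← tsum_mul_left]
    refine tsum_congr fun k => ?_
    rw [← Complex.exp_add, ← Complex.exp_add]
    refine Complex.exp_eq_exp_iff_exists_int.mpr ⟨k, ?_⟩
    field_simp
    ring
  · funext z
    simp only [opT, psi, psiTerm]
    rw [← tsum_mul_left]
    refine tsum_congr fun k => ?_
    rw [← Complex.exp_add]
    congr 1
    push_cast
    field_simp
    ring
end

section
/- Let n ≥ 1 be an integer, j₀ = (n−1)/2, k ∈ {0,…,n−1}, and z ∈ ℂ. Then the renormalized theta basis function ψ̃_k(z,τ) = e^{−πi(k−j₀)²τ/n}·ψ_k(z) = ∑_{m∈ℤ, m≡k (mod n)} exp(πi[(m−j₀)² − (k−j₀)²]τ/n + 2πi(m−j₀)z) converges to φ_k(z) = e^{2πi(k−j₀)z} as Im τ → +∞; that is, the limit of ψ̃_k(z,τ) along the filter of τ in the upper half-plane with Im τ → +∞ equals e^{2πi(k−j₀)z}. -/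
set_option maxHeartbeats 1000000


open Complex

/-- The renormalized theta basis function
`ψ̃_k(z,τ) = e^{−πi(k−(n−1)/2)²τ/n} ψ_k(z)` converges to
`φ_k(z) = e^{2πi(k−(n−1)/2)z}` as `Im τ → +∞`. -/
theorem psiTilde_tendsto_phi (n : ℕ) (hn : 1 ≤ n) (k : ℕ) (hk : k < n) (z : ℂ) :
    Filter.Tendsto
      (fun τ : ℂ =>
        Complex.exp (-(Real.pi : ℂ) * Complex.I *
            ((k : ℂ) - ((n : ℂ) - 1) / 2) ^ 2 * τ / (n : ℂ)) *
          psi n τ (k : ℤ) z)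
      (Filter.comap Complex.im Filter.atTop)
      (nhds (Complex.exp (2 * (Real.pi : ℂ) * Complex.I *
        ((k : ℂ) - ((n : ℂ) - 1) / 2) * z))) := by
  have hn0 : (n : ℂ) ≠ 0 := Nat.cast_ne_zero.mpr (by omega)
  set m : ℝ := (k : ℝ) - ((n : ℝ) - 1) / 2 with hm
  set C : ℂ := Complex.exp (2 * (Real.pi : ℂ) * Complex.I * (m : ℂ) * z) with hC
  have hCeq : C = Complex.exp (2 * (Real.pi : ℂ) * Complex.I *
      ((k : ℂ) - ((n : ℂ) - 1) / 2) * z) := by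
    rw [hC]; congr 1; push_cast [hm]; ring
  set f : ℂ → ℤ → ℂ := fun τ j =>
    C * jacobiTheta₂_term j ((m : ℂ) * τ + (n : ℂ) * z) ((n : ℂ) * τ) with hf
  -- key pointwise identity
  have hterm : ∀ (τ : ℂ) (j : ℤ),
      Complex.exp (-(Real.pi : ℂ) * Complex.I *
          ((k : ℂ) - ((n : ℂ) - 1) / 2) ^ 2 * τ / (n : ℂ)) * psiTerm n τ (k : ℤ) j z
        = f τ j := by
    intro τ j
    simp only [hf, psiTerm, jacobiTheta₂_term, hC, ← Complex.exp_add]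
    congr 1
    push_cast [hm]
    field_simp
    ring
  have hpsi : ∀ τ : ℂ,
      Complex.exp (-(Real.pi : ℂ) * Complex.I *
          ((k : ℂ) - ((n : ℂ) - 1) / 2) ^ 2 * τ / (n : ℂ)) * psi n τ (k : ℤ) z
        = ∑' j : ℤ, f τ j := by
    intro τ
    rw [psi, ← tsum_mul_left]
    exact tsum_congr fun j => hterm τ j
  -- key inequality
  have key : ∀ j : ℤ, ((j : ℝ)) ^ 2 ≤ (n : ℝ) * (j : ℝ) ^ 2 + 2 * (j : ℝ) * m := by
    intro j
    have hn1 : (1 : ℝ) ≤ (n : ℝ) := by exact_mod_cast hn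
    have hk0 : (0 : ℝ) ≤ (k : ℝ) := by positivity
    have hkn : (k : ℝ) ≤ (n : ℝ) - 1 := by
      have : (k : ℝ) + 1 ≤ (n : ℝ) := by exact_mod_cast hk
      linarith
    have hm1 : |m| ≤ ((n : ℝ) - 1) / 2 := by
      rw [hm, abs_le]; constructor <;> linarith
    rcases eq_or_ne j 0 with rfl | hj
    · simp
    · have hj1 : (1 : ℝ) ≤ |(j : ℝ)| := by
        rw [← Int.cast_abs]; exact_mod_cast Int.one_le_abs hj
      have h2 : -(2 * ((j : ℝ) * m)) ≤ 2 * (|(j : ℝ)| * |m|) := by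
        have := neg_abs_le ((j : ℝ) * m)
        rw [abs_mul] at this; nlinarith [abs_nonneg ((j : ℝ) * m)]
      have h3 : |(j : ℝ)| * |m| ≤ |(j : ℝ)| * (((n : ℝ) - 1) / 2) :=
        mul_le_mul_of_nonneg_left hm1 (abs_nonneg _)
      have h4 : ((n : ℝ) - 1) * |(j : ℝ)| ≤ ((n : ℝ) - 1) * |(j : ℝ)| ^ 2 := by
        nlinarith [mul_nonneg (mul_nonneg (by linarith : (0:ℝ) ≤ (n:ℝ) - 1)
          (abs_nonneg ((j : ℝ)))) (by linarith : (0:ℝ) ≤ |(j : ℝ)| - 1)]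
      have h5 : |(j : ℝ)| ^ 2 = (j : ℝ) ^ 2 := _root_.sq_abs _
      rw [h5] at h4
      nlinarith [h2, h3, h4]
  -- norm formula
  have hnorm : ∀ (τ : ℂ) (j : ℤ), ‖f τ j‖ = ‖C‖ *
      Real.exp (-(Real.pi * ((n : ℝ) * (j : ℝ) ^ 2 + 2 * (j : ℝ) * m)) * τ.im
        - 2 * Real.pi * (j : ℝ) * ((n : ℝ) * z.im)) := by
    intro τ j
    have h1 : ((m : ℂ) * τ + (n : ℂ) * z).im = m * τ.im + (n : ℝ) * z.im := by
      simp [Complex.add_im, Complex.mul_im]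
    have h2 : ((n : ℂ) * τ).im = (n : ℝ) * τ.im := by
      simp [Complex.mul_im]
    rw [hf]
    simp only [norm_mul, norm_jacobiTheta₂_term, h1, h2]
    congr 1
    ring
  -- main convergence
  rw [show Complex.exp (2 * (Real.pi : ℂ) * Complex.I *
      ((k : ℂ) - ((n : ℂ) - 1) / 2) * z) = ∑' j : ℤ, (if j = 0 then C else 0) by
    rw [tsum_ite_eq]; exact hCeq.symm]
  refine Filter.Tendsto.congr (fun τ => (hpsi τ).symm) ?_
  have him : Filter.Tendsto Complex.im (Filter.comap Complex.im Filter.atTop) Filter.atTop :=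
    Filter.tendsto_comap
  refine tendsto_tsum_of_dominated_convergence
    ((summable_pow_mul_jacobiTheta₂_term_bound ((n : ℝ) * |z.im|) one_pos 0).mul_left ‖C‖)
    ?_ ?_
  · intro j
    rcases eq_or_ne j 0 with rfl | hj
    · simpa [hf, jacobiTheta₂_term] using (tendsto_const_nhds :
        Filter.Tendsto (fun _ : ℂ => C) (Filter.comap Complex.im Filter.atTop) (nhds C))
    · rw [if_neg hj]
      rw [tendsto_zero_iff_norm_tendsto_zero]
      have ha : 0 < Real.pi * ((n : ℝ) * (j : ℝ) ^ 2 + 2 * (j : ℝ) * m) := by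
        have hj1 : (1 : ℝ) ≤ (j : ℝ) ^ 2 := by
          have h := Int.one_le_abs hj
          have h2 : (1 : ℝ) ≤ |(j : ℝ)| := by rw [← Int.cast_abs]; exact_mod_cast h
          nlinarith [h2, abs_nonneg ((j:ℝ)), _root_.sq_abs ((j:ℝ))]
        nlinarith [key j, Real.pi_pos]
      have h1 : Filter.Tendsto (fun τ : ℂ =>
          Real.pi * ((n : ℝ) * (j : ℝ) ^ 2 + 2 * (j : ℝ) * m) * τ.im)
          (Filter.comap Complex.im Filter.atTop) Filter.atTop :=
        him.const_mul_atTop ha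
      have h2 : Filter.Tendsto (fun τ : ℂ =>
          -(Real.pi * ((n : ℝ) * (j : ℝ) ^ 2 + 2 * (j : ℝ) * m)) * τ.im
            - 2 * Real.pi * (j : ℝ) * ((n : ℝ) * z.im))
          (Filter.comap Complex.im Filter.atTop) Filter.atBot := by
        have := (Filter.tendsto_neg_atTop_atBot.comp h1)
        have h3 := Filter.tendsto_atBot_add_const_right (Filter.comap Complex.im Filter.atTop)
          (-(2 * Real.pi * (j : ℝ) * ((n : ℝ) * z.im))) this
        refine h3.congr fun τ => ?_
        simp only [Function.comp_apply]
        ring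
      have h4 : Filter.Tendsto (fun τ : ℂ => ‖C‖ * Real.exp
          (-(Real.pi * ((n : ℝ) * (j : ℝ) ^ 2 + 2 * (j : ℝ) * m)) * τ.im
            - 2 * Real.pi * (j : ℝ) * ((n : ℝ) * z.im)))
          (Filter.comap Complex.im Filter.atTop) (nhds (‖C‖ * 0)) :=
        (Real.tendsto_exp_atBot.comp h2).const_mul _
      rw [mul_zero] at h4
      exact h4.congr fun τ => (hnorm τ j).symm
  · filter_upwards [him.eventually (Filter.eventually_ge_atTop 1)] with τ hτ
    intro j
    rw [hnorm τ j]
    simp only [pow_zero, one_mul]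
    push_cast
    refine mul_le_mul_of_nonneg_left (Real.exp_le_exp.mpr ?_) (norm_nonneg _)
    have c0 : (0 : ℝ) ≤ (n : ℝ) * (j : ℝ) ^ 2 + 2 * (j : ℝ) * m :=
      le_trans (sq_nonneg _) (key j)
    have c1 : Real.pi * ((n : ℝ) * (j : ℝ) ^ 2 + 2 * (j : ℝ) * m)
        ≤ Real.pi * ((n : ℝ) * (j : ℝ) ^ 2 + 2 * (j : ℝ) * m) * τ.im := by
      nlinarith [mul_nonneg (mul_nonneg Real.pi_pos.le c0) (by linarith : (0:ℝ) ≤ τ.im - 1)]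
    have c2 : -((j : ℝ) * z.im) ≤ |(j : ℝ)| * |z.im| := by
      rw [← abs_mul]
      exact neg_le_abs _
    have c3 : Real.pi * (j : ℝ) ^ 2 ≤ Real.pi * ((n : ℝ) * (j : ℝ) ^ 2 + 2 * (j : ℝ) * m) :=
      mul_le_mul_of_nonneg_left (key j) Real.pi_pos.le
    nlinarith [Real.pi_pos, mul_le_mul_of_nonneg_left c2
      (by positivity : (0:ℝ) ≤ 2 * Real.pi * (n : ℝ))]
end

section
/- Let n ≥ 1 be an integer, β ∈ ℂ, and i, j ∈ {0,…,n−1}. Then in the polynomial ring ℂ[z₁,z₂], the polynomial Q(z₁,z₂) = z₂^i·z₁^j − (z₁−2β)^i·(z₂+2β)^j is divisible by (z₁ − z₂ − 2β), and the quotient polynomial has degree at most n−1 in z₁ and degree at most n−1 in z₂. (This is the key computation showing that the twisted rational Shibukawa–Ueno operators R^r_{0,β}(λ) preserve V^r_n ⊗ V^r_n, where V^r_n = Span{z^k : 0 ≤ k ≤ n−1}.) -/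
open MvPolynomial

private noncomputable def φ2 : MvPolynomial (Fin 2) ℂ ≃ₐ[ℂ] Polynomial (MvPolynomial (Fin 1) ℂ) :=
  MvPolynomial.finSuccEquiv ℂ 1

private lemma phi_X0 : φ2 (X 0) = Polynomial.X := finSuccEquiv_X_zero
private lemma phi_X1 : φ2 (X 1) = Polynomial.C (X 0) := by
  have : (1 : Fin 2) = Fin.succ 0 := rfl
  rw [φ2, this, finSuccEquiv_X_succ]
private lemma phi_C (a : ℂ) : φ2 (C a) = Polynomial.C (C a) := by
  simp [φ2, finSuccEquiv_apply]

private lemma natdeg_key (c : MvPolynomial (Fin 1) ℂ) (q : Polynomial (MvPolynomial (Fin 1) ℂ))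
    (hq : q ≠ 0) :
    ((Polynomial.X - Polynomial.C c) * q).natDegree = q.natDegree + 1 := by
  rw [Polynomial.natDegree_mul (Polynomial.X_sub_C_ne_zero c) hq,
    Polynomial.natDegree_X_sub_C, add_comm]

/-- The key divisibility for the rational case: in `ℂ[z₁,z₂]` (with `z₁ = X 0`,
`z₂ = X 1`), the polynomial `Q = z₂^i z₁^j − (z₁−2β)^i (z₂+2β)^j` is divisible by
`z₁ − z₂ − 2β`, and the quotient has degree at most `n−1` in each variable. -/
theorem rational_divisibility (n : ℕ) (hn : 1 ≤ n) (β : ℂ)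
    (i j : ℕ) (hi : i < n) (hj : j < n) :
    ∃ Q : MvPolynomial (Fin 2) ℂ,
      (X 1 : MvPolynomial (Fin 2) ℂ) ^ i * (X 0) ^ j -
          ((X 0) - C (2 * β)) ^ i * ((X 1) + C (2 * β)) ^ j =
        ((X 0) - (X 1) - C (2 * β)) * Q ∧
      MvPolynomial.degreeOf 0 Q ≤ n - 1 ∧
      MvPolynomial.degreeOf 1 Q ≤ n - 1 := by
  classical
  set b : ℂ := 2 * β with hb
  set P : MvPolynomial (Fin 2) ℂ :=
    (X 1 : MvPolynomial (Fin 2) ℂ) ^ i * (X 0) ^ j -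
      ((X 0) - C b) ^ i * ((X 1) + C b) ^ j with hP
  set d : MvPolynomial (Fin 2) ℂ := (X 0) - (X 1) - C b with hd
  set c : MvPolynomial (Fin 1) ℂ := X 0 + C b with hc
  have hφd : φ2 d = Polynomial.X - Polynomial.C c := by
    rw [hd, hc]
    simp only [map_sub, phi_X0, phi_X1, phi_C, Polynomial.C_add]
    ring
  have hφP : φ2 P = Polynomial.C ((X 0 : MvPolynomial (Fin 1) ℂ) ^ i) * Polynomial.X ^ j
      - (Polynomial.X - Polynomial.C (C b)) ^ i
        * (Polynomial.C (X 0) + Polynomial.C (C b)) ^ j := by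
    rw [hP]
    simp only [map_sub, map_mul, map_pow, map_add, phi_X0, phi_X1, phi_C, Polynomial.C_pow]
  have hroot : Polynomial.IsRoot (φ2 P) c := by
    rw [Polynomial.IsRoot.def, hφP, hc]
    simp only [Polynomial.eval_sub, Polynomial.eval_mul, Polynomial.eval_pow,
      Polynomial.eval_add, Polynomial.eval_C, Polynomial.eval_X]
    ring
  obtain ⟨q, hq⟩ := (Polynomial.dvd_iff_isRoot).mpr hroot
  have hPd : P = d * φ2.symm q := by
    apply φ2.injective
    rw [map_mul, hφd, AlgEquiv.apply_symm_apply, hq]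
  refine ⟨φ2.symm q, hPd, ?_, ?_⟩
  · -- degreeOf 0
    have hdeg : MvPolynomial.degreeOf 0 (φ2.symm q) = q.natDegree := by
      have h := natDegree_finSuccEquiv (φ2.symm q)
      rw [← h, show finSuccEquiv ℂ 1 (φ2.symm q) = q from φ2.apply_symm_apply q]
    rw [hdeg]
    rcases eq_or_ne q 0 with h | h
    · simp [h]
    · have h1 : (φ2 P).natDegree = q.natDegree + 1 := by rw [hq]; exact natdeg_key _ _ h
      have h2 : (φ2 P).natDegree ≤ n - 1 := by
        rw [hφP]
        apply le_trans (Polynomial.natDegree_sub_le _ _)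
        apply max_le
        · apply le_trans (Polynomial.natDegree_mul_le)
          rw [Polynomial.natDegree_C, Polynomial.natDegree_X_pow]
          omega
        · apply le_trans (Polynomial.natDegree_mul_le)
          have e1 : ((Polynomial.X - Polynomial.C (C b : MvPolynomial (Fin 1) ℂ)) ^ i).natDegree ≤ i := by
            refine le_trans (Polynomial.natDegree_pow_le) ?_
            rw [Polynomial.natDegree_X_sub_C]; omega
          have e2 : ((Polynomial.C (X 0 : MvPolynomial (Fin 1) ℂ) + Polynomial.C (C b)) ^ j).natDegree = 0 := by
            rw [← Polynomial.C_add, ← Polynomial.C_pow, Polynomial.natDegree_C]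
          omega
      omega
  · -- degreeOf 1 : use swap rename
    set σ : MvPolynomial (Fin 2) ℂ ≃ₐ[ℂ] MvPolynomial (Fin 2) ℂ :=
      renameEquiv ℂ (Equiv.swap (0 : Fin 2) 1) with hσ
    have hswap : MvPolynomial.degreeOf 1 (φ2.symm q)
        = MvPolynomial.degreeOf 0 (σ (φ2.symm q)) := by
      have h := degreeOf_rename_of_injective (p := φ2.symm q)
        (f := Equiv.swap (0 : Fin 2) 1) (Equiv.swap _ _).injective 1
      simpa [hσ, renameEquiv_apply] using h.symm
    rw [hswap]
    have hren : σ P = σ d * σ (φ2.symm q) := by rw [hPd, map_mul]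
    set q2 := φ2 (σ (φ2.symm q)) with hq2
    have hdeg : MvPolynomial.degreeOf 0 (σ (φ2.symm q)) = q2.natDegree := by
      rw [hq2, φ2]; exact (natDegree_finSuccEquiv _).symm
    rw [hdeg]
    rcases eq_or_ne q2 0 with h | h
    · simp [h]
    · have hσd : φ2 (σ d) = -(Polynomial.X - Polynomial.C ((X 0 : MvPolynomial (Fin 1) ℂ) - C b)) := by
        rw [hd, hσ]
        simp only [renameEquiv_apply, map_sub, rename_X, rename_C,
          Equiv.swap_apply_left, Equiv.swap_apply_right, phi_X0, phi_X1, phi_C, Polynomial.C_sub]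
        ring
      have hσP : φ2 (σ P) = Polynomial.X ^ i * Polynomial.C ((X 0 : MvPolynomial (Fin 1) ℂ) ^ j)
          - Polynomial.C (((X 0 : MvPolynomial (Fin 1) ℂ) - C b) ^ i)
            * (Polynomial.X + Polynomial.C (C b)) ^ j := by
        rw [hP, hσ]
        simp only [renameEquiv_apply, map_sub, map_mul, map_pow, map_add, rename_X, rename_C,
          Equiv.swap_apply_left, Equiv.swap_apply_right, phi_X0, phi_X1, phi_C,
          Polynomial.C_sub, Polynomial.C_pow]
      have h1 : (φ2 (σ P)).natDegree = q2.natDegree + 1 := by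
        rw [hren, map_mul, hσd, ← hq2]
        have e : -(Polynomial.X - Polynomial.C ((X 0 : MvPolynomial (Fin 1) ℂ) - C b)) * q2
            = -((Polynomial.X - Polynomial.C ((X 0 : MvPolynomial (Fin 1) ℂ) - C b)) * q2) := by
          ring
        rw [e, Polynomial.natDegree_neg]
        exact natdeg_key _ _ h
      have h2 : (φ2 (σ P)).natDegree ≤ n - 1 := by
        rw [hσP]
        apply le_trans (Polynomial.natDegree_sub_le _ _)
        apply max_le
        · apply le_trans (Polynomial.natDegree_mul_le)
          rw [Polynomial.natDegree_C, Polynomial.natDegree_X_pow]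
          omega
        · apply le_trans (Polynomial.natDegree_mul_le)
          have e1 : ((Polynomial.X + Polynomial.C (C b : MvPolynomial (Fin 1) ℂ)) ^ j).natDegree ≤ j := by
            refine le_trans (Polynomial.natDegree_pow_le) ?_
            rw [Polynomial.natDegree_X_add_C]; omega
          rw [Polynomial.natDegree_C]
          omega
      omega
end

section
/- Let n ≥ 1 be an integer, k ∈ {0,…,n−1}, and z ∈ ℂ. Then lim_{τ₁→∞} (τ₁/(2πi))^k · ∑_{l=0}^{k} (−1)^{k−l}·binom(k,l)·e^{2πi(l−(n−1)/2)z/τ₁} = z^k, where the limit is taken as τ₁ → ∞ in ℂ (i.e. |τ₁| → ∞). (Thus the renormalized trigonometric basis functions φ̃_k(z,τ₁) = ∑_{l=0}^{k} (−1)^{k−l}(τ₁/(2πi))^k binom(k,l) e^{2πi(l−(n−1)/2)z/τ₁} of V^t_n converge to the monomials z^k of V^r_n, realizing the trigonometric-to-rational degeneration.) -/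
/-! By the binomial theorem the sum is `(e^w - 1)^k e^{-((n-1)/2) w}` with `w = z/t`,
`t = τ₁/(2πi)`, so the expression is `(t (e^{z/t} - 1))^k e^{-((n-1)/2) z/t}`. As `t → ∞`,
`t (e^{z/t} - 1) = z · dslope exp 0 (z/t) → z · exp' 0 = z` and the last factor tends to `1`. -/

open Complex Filter Bornology Topology

lemma sum_neg_one_pow_mul_choose_mul_exp (k : ℕ) (m w : ℂ) :
    ∑ l ∈ Finset.range (k + 1), (-1 : ℂ) ^ (k - l) * (k.choose l : ℂ) * exp ((l - m) * w)
      = (exp w - 1) ^ k * exp (-(m * w)) := by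
  rw [sub_eq_add_neg, add_pow, Finset.sum_mul]
  refine Finset.sum_congr rfl fun l _ => ?_
  rw [sub_mul, sub_eq_add_neg, exp_add, ← exp_nat_mul]
  ring

lemma tendsto_mul_exp_div_sub_one (z : ℂ) :
    Tendsto (fun t : ℂ => t * (exp (z / t) - 1)) (cobounded ℂ) (𝓝 z) := by
  have hslope : Tendsto (dslope exp 0) (𝓝 0) (𝓝 1) := by
    simpa using (continuousAt_dslope_same.2 (differentiableAt_exp (x := (0 : ℂ)))).tendsto
  have hzt : Tendsto (fun t : ℂ => z / t) (cobounded ℂ) (𝓝 0) := by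
    simpa [div_eq_mul_inv] using tendsto_inv₀_cobounded.const_mul z
  have hlim : Tendsto (fun t => z * dslope exp 0 (z / t)) (cobounded ℂ) (𝓝 z) := by
    simpa using (hslope.comp hzt).const_mul z
  refine hlim.congr' ?_
  filter_upwards [eventually_ne_cobounded 0] with t ht
  rcases eq_or_ne z 0 with rfl | hz
  · simp
  · rw [dslope_of_ne _ (div_ne_zero hz ht), slope_def_field]
    simp only [sub_zero, exp_zero]
    field_simp

lemma tendsto_pow_mul_sum_exp (k : ℕ) (m z : ℂ) :
    Tendsto (fun t : ℂ => t ^ k * ∑ l ∈ Finset.range (k + 1),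
        (-1 : ℂ) ^ (k - l) * (k.choose l : ℂ) * exp ((l - m) * (z / t)))
      (cobounded ℂ) (𝓝 (z ^ k)) := by
  simp_rw [sum_neg_one_pow_mul_choose_mul_exp, ← mul_assoc, ← mul_pow]
  have hexp : Tendsto (fun t : ℂ => exp (-(m * (z / t)))) (cobounded ℂ) (𝓝 1) := by
    have hzt : Tendsto (fun t : ℂ => -(m * (z / t))) (cobounded ℂ) (𝓝 0) := by
      simpa [div_eq_mul_inv] using ((tendsto_inv₀_cobounded.const_mul z).const_mul m).neg
    simpa [Function.comp_def] using (continuous_exp.tendsto 0).comp hzt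
  simpa using ((tendsto_mul_exp_div_sub_one z).pow k).mul hexp

theorem phiTilde_tendsto_monomial_general (n : ℕ) (k : ℕ) (z : ℂ) :
    Filter.Tendsto
      (fun τ₁ : ℂ =>
        (τ₁ / (2 * (Real.pi : ℂ) * Complex.I)) ^ k *
          ∑ l ∈ Finset.range (k + 1),
            (-1 : ℂ) ^ (k - l) * (Nat.choose k l : ℂ) *
              Complex.exp (2 * (Real.pi : ℂ) * Complex.I *
                ((l : ℂ) - ((n : ℂ) - 1) / 2) * z / τ₁))
      (Filter.comap (fun τ₁ : ℂ => ‖τ₁‖) Filter.atTop)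
      (nhds (z ^ k)) := by
  have h2πi : 2 * (Real.pi : ℂ) * I ≠ 0 := by simp [Real.pi_ne_zero]
  rw [comap_norm_atTop]
  refine ((tendsto_pow_mul_sum_exp k (((n : ℂ) - 1) / 2) z).comp
    (tendsto_mul_right_cobounded (inv_ne_zero h2πi))).congr fun τ => ?_
  simp only [Function.comp_apply, ← div_eq_mul_inv]
  congr 1
  refine Finset.sum_congr rfl fun l _ => ?_
  congr 2
  field_simp

/-- The renormalized trigonometric basis functions
`φ̃_k(z,τ₁) = (τ₁/2πi)^k ∑_{l=0}^{k} (−1)^{k−l} C(k,l) e^{2πi(l−(n−1)/2)z/τ₁}`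
converge to the monomials `z^k` as `τ₁ → ∞` in `ℂ` (i.e. `|τ₁| → ∞`). -/
theorem phiTilde_tendsto_monomial (n : ℕ) (hn : 1 ≤ n) (k : ℕ) (hk : k < n) (z : ℂ) :
    Filter.Tendsto
      (fun τ₁ : ℂ =>
        (τ₁ / (2 * (Real.pi : ℂ) * Complex.I)) ^ k *
          ∑ l ∈ Finset.range (k + 1),
            (-1 : ℂ) ^ (k - l) * (Nat.choose k l : ℂ) *
              Complex.exp (2 * (Real.pi : ℂ) * Complex.I *
                ((l : ℂ) - ((n : ℂ) - 1) / 2) * z / τ₁))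
      (Filter.comap (fun τ₁ : ℂ => ‖τ₁‖) Filter.atTop)
      (nhds (z ^ k)) :=
  phiTilde_tendsto_monomial_general n k z
end
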